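/- Let u ∈ L^1(Ω) for an open Ω ⊂ ℝ^d, let x ∈ Ω, and suppose there exists an optimal ball B ∈ 𝓑_x with x ∈ B (x in the open ball). If all partial derivatives of M_Ω u at x exist in the classical sense, then ∇M_Ω u(x) = 0. -/
import Mathlib

open MeasureTheory Metric Set Filter Topology
open scoped ENNReal NNReal RealInnerProductSpace
noncomputable section

noncomputable def maxFn {d : ℕ} (Ω : Set (EuclideanSpace ℝ (Fin d)))
    (u : EuclideanSpace ℝ (Fin d) → ℝ) (x : EuclideanSpace ℝ (Fin d)) : ℝ≥0∞ :=
  ⨆ (z : EuclideanSpace ℝ (Fin d)) (r : ℝ) (_ : 0 < r) (_ : x ∈ ball z r)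
    (_ : ball z r ⊆ Ω), ENNReal.ofReal (⨍ y in ball z r, |u y| ∂volume)
/-- if the supremum defining `M_Ω u (x)` is attained by a ball
containing `x` in its interior, and all classical partial derivatives of
`M_Ω u` exist at `x`, then they all vanish. -/
theorem stmt10 {d : ℕ} (Ω : Set (EuclideanSpace ℝ (Fin d))) (hΩ : IsOpen Ω)
    (u : EuclideanSpace ℝ (Fin d) → ℝ) (hu : IntegrableOn u Ω)
    (x : EuclideanSpace ℝ (Fin d)) (hx : x ∈ Ω)
    (hopt : ∃ (z : EuclideanSpace ℝ (Fin d)) (r : ℝ), 0 < r ∧ ball z r ⊆ Ω ∧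
      x ∈ ball z r ∧
      ENNReal.ofReal (⨍ y in ball z r, |u y| ∂volume) = maxFn Ω u x)
    (g : Fin d → ℝ)
    (hg : ∀ i : Fin d, HasDerivAt
      (fun t : ℝ => (maxFn Ω u (x + t • EuclideanSpace.single i 1)).toReal) (g i) 0) :
    ∀ i, g i = 0 := by
  obtain ⟨z, r, hr, hsub, hxball, heq⟩ := hopt
  set A : ℝ := ⨍ y in ball z r, |u y| ∂volume with hA
  have hA0 : 0 ≤ A := by
    rw [hA, average]
    exact integral_nonneg fun y => abs_nonneg _
  -- lower bound for maxFn at points of the ball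
  have key : ∀ w ∈ ball z r, ENNReal.ofReal A ≤ maxFn Ω u w := by
    intro w hw
    exact le_iSup_of_le z (le_iSup_of_le r (le_iSup_of_le hr
      (le_iSup_of_le hw (le_iSup_of_le hsub le_rfl))))
  intro i
  set f : ℝ → ℝ := fun t => (maxFn Ω u (x + t • EuclideanSpace.single i 1)).toReal with hf
  have hf0 : f 0 = A := by
    simp only [hf, zero_smul, add_zero, ← heq, ENNReal.toReal_ofReal hA0]
  have hmem : ∀ᶠ t in 𝓝 (0 : ℝ), x + t • EuclideanSpace.single i 1 ∈ ball z r := by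
    have hc : ContinuousAt (fun t : ℝ => x + t • EuclideanSpace.single i 1) 0 := by
      fun_prop
    have : (fun t : ℝ => x + t • EuclideanSpace.single i 1) 0 = x := by simp
    exact hc.eventually_mem (by simp only [zero_smul, add_zero]; exact isOpen_ball.mem_nhds hxball)
  rcases eq_or_lt_of_le hA0 with hz | hpos
  · -- A = 0 : f has a global minimum at 0
    have hmin : IsLocalMin f 0 := by
      filter_upwards with t
      rw [hf0, ← hz]
      exact ENNReal.toReal_nonneg
    exact hmin.hasDerivAt_eq_zero (hg i)
  · -- A > 0 : f is eventually positive near 0 by continuity, so maxFn is finite there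
    have hcont : ContinuousAt f 0 := (hg i).continuousAt
    have hposev : ∀ᶠ t in 𝓝 (0 : ℝ), 0 < f t := by
      have : Tendsto f (𝓝 0) (𝓝 A) := by rw [← hf0]; exact hcont
      exact this.eventually_const_lt hpos
    have hmin : IsLocalMin f 0 := by
      filter_upwards [hmem, hposev] with t hmemt hpost
      rw [hf0]
      have hne : maxFn Ω u (x + t • EuclideanSpace.single i 1) ≠ ⊤ := by
        intro htop
        simp [hf, htop] at hpost
      have := key _ hmemt
      calc A = (ENNReal.ofReal A).toReal := (ENNReal.toReal_ofReal hA0).symm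
        _ ≤ f t := ENNReal.toReal_le_toReal ENNReal.ofReal_ne_top hne |>.mpr this
    exact hmin.hasDerivAt_eq_zero (hg i)
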